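/- arXiv:2205.06063 — 6 statements merged into one kernel-verified Lean document; each statement's English description precedes it below -/
import Mathlib

section
/- Assume ρ > 0, Θ_B > 1, 1 < Θ_th < Θ_B/(Θ_B − 1), and set ε3 = (Θ_B − 1)Θ_th/(ρ(Θ_th − (Θ_th − 1)Θ_B)) and ε4 = Θ_B(Θ_th − 1)/(ρ(Θ_B − Θ_th(Θ_B − 1))). For any g_B > ε3 and g_F > 0, with ω = (ρg_B + 1)(Θ_B − 1)/(ρg_B Θ_B), one has ρ(1 − Θ_th ω)g_F < Θ_th − 1 if and only if g_F < ε4 g_B/(g_B − ε3). -/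
/-! With `D = Θ_B − Θ_th(Θ_B − 1)`, which is positive exactly when `Θ_th < Θ_B/(Θ_B − 1)`,
the coefficient of `g_F` factors as `ρ(1 − Θ_th ω) = ρ D (g_B − ε3) / (g_B Θ_B)`. For
`g_B > ε3 > 0` it is positive, so the outage condition can be divided by it, and
`(Θ_th − 1) / (ρ D (g_B − ε3) / (g_B Θ_B)) = ε4 g_B / (g_B − ε3)`. -/

section FixedPowerAllocation

variable {ρ ΘB Θth gB : ℝ}

lemma sub_mul_sub_one_pos_of_lt_div (hΘB : 1 < ΘB) (hth : Θth < ΘB / (ΘB - 1)) :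
    0 < ΘB - Θth * (ΘB - 1) :=
  sub_pos.2 ((lt_div_iff₀ (sub_pos.2 hΘB)).1 hth)

lemma mul_one_sub_mul_fpa_coeff (hρ : ρ ≠ 0) (hgB : gB ≠ 0) (hΘB : ΘB ≠ 0)
    (hD : ΘB - Θth * (ΘB - 1) ≠ 0) :
    ρ * (1 - Θth * ((ρ * gB + 1) * (ΘB - 1) / (ρ * gB * ΘB))) =
      ρ * (ΘB - Θth * (ΘB - 1)) * (gB - (ΘB - 1) * Θth / (ρ * (ΘB - Θth * (ΘB - 1)))) /
        (gB * ΘB) := by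
  field_simp
  ring

end FixedPowerAllocation

theorem stmt_5_general (ρ ΘB Θth gB gF : ℝ) (hρ : 0 < ρ) (hΘB : 1 < ΘB) (hΘth : 1 < Θth)
    (hth : Θth < ΘB / (ΘB - 1))
    (hgB : (ΘB - 1) * Θth / (ρ * (Θth - (Θth - 1) * ΘB)) < gB) :
    ρ * (1 - Θth * ((ρ * gB + 1) * (ΘB - 1) / (ρ * gB * ΘB))) * gF < Θth - 1 ↔
      gF < (ΘB * (Θth - 1) / (ρ * (ΘB - Θth * (ΘB - 1)))) * gB /
        (gB - (ΘB - 1) * Θth / (ρ * (Θth - (Θth - 1) * ΘB))) := by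
  have hD := sub_mul_sub_one_pos_of_lt_div hΘB hth
  rw [show Θth - (Θth - 1) * ΘB = ΘB - Θth * (ΘB - 1) by ring] at hgB ⊢
  set ε3 := (ΘB - 1) * Θth / (ρ * (ΘB - Θth * (ΘB - 1)))
  have hε3 : 0 < ε3 := by
    have := sub_pos.2 hΘB
    positivity
  have hgB₀ : 0 < gB := hε3.trans hgB
  have hgBε3 : 0 < gB - ε3 := sub_pos.2 hgB
  have hcoeff : 0 < ρ * (ΘB - Θth * (ΘB - 1)) * (gB - ε3) / (gB * ΘB) := by positivity
  rw [mul_one_sub_mul_fpa_coeff hρ.ne' hgB₀.ne' (by linarith) hD.ne', ← lt_div_iff₀' hcoeff]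
  field_simp

/-- Assume ρ > 0, Θ_B > 1, 1 < Θ_th < Θ_B/(Θ_B − 1), and set
ε3 = (Θ_B − 1)Θ_th/(ρ(Θ_th − (Θ_th − 1)Θ_B)) and ε4 = Θ_B(Θ_th − 1)/(ρ(Θ_B − Θ_th(Θ_B − 1))).
For any g_B > ε3 and g_F > 0, with ω = (ρg_B + 1)(Θ_B − 1)/(ρg_B Θ_B), one has
ρ(1 − Θ_th ω)g_F < Θ_th − 1 iff g_F < ε4 g_B/(g_B − ε3). -/
theorem stmt_5 (ρ ΘB Θth gB gF : ℝ) (hρ : 0 < ρ) (hΘB : 1 < ΘB) (hΘth : 1 < Θth)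
    (hth : Θth < ΘB / (ΘB - 1))
    (hgB : (ΘB - 1) * Θth / (ρ * (Θth - (Θth - 1) * ΘB)) < gB) (hgF : 0 < gF) :
    ρ * (1 - Θth * ((ρ * gB + 1) * (ΘB - 1) / (ρ * gB * ΘB))) * gF < Θth - 1 ↔
      gF < (ΘB * (Θth - 1) / (ρ * (ΘB - Θth * (ΘB - 1)))) * gB /
        (gB - (ΘB - 1) * Θth / (ρ * (Θth - (Θth - 1) * ΘB))) :=
  stmt_5_general ρ ΘB Θth gB gF hρ hΘB hΘth hth hgB
end

section
/- Let m ≥ 1 be an integer, λ_B, λ_F > 0, and let G_B, G_F be independent Gamma random variables with shape m and rates λ_B, λ_F respectively. For every a ≥ 0: P(G_F < G_B and G_B > a) = 1 − F_B(a) − (λ_B^m/Γ(m)) · Σ_{i=0}^{m−1} (λ_F^i / (i!·A2^{i+m})) · Γ(i+m, A2·a), where A2 = λ_B + λ_F, F_B is the CDF of G_B, and Γ(s,x) = ∫_x^∞ t^{s−1}e^{−t} dt is the upper incomplete Gamma function. -/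
open MeasureTheory ProbabilityTheory

/-- The law of a Gamma random variable with integer shape `m` and rate `l`: the measure on ℝ
with density f(x) = l^m x^(m−1) e^(−lx)/Γ(m) for x > 0 (w.r.t. Lebesgue measure). -/
noncomputable def gammaLaw (m : ℕ) (l : ℝ) : Measure ℝ :=
  volume.withDensity fun x =>
    ENNReal.ofReal
      (if 0 < x then l ^ m * x ^ (m - 1) * Real.exp (-(l * x)) / Real.Gamma m else 0)

/-- The CDF F(x) = 1 − e^(−lx) Σ_{i=0}^{m−1} (lx)^i/i! of a Gamma random variable with integer
shape `m` and rate `l`. -/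
noncomputable def gammaCDF (m : ℕ) (l x : ℝ) : ℝ :=
  1 - Real.exp (-(l * x)) * ∑ i ∈ Finset.range m, (l * x) ^ i / (Nat.factorial i : ℝ)

/-- The upper incomplete Gamma function Γ(s,x) = ∫_x^∞ t^(s−1) e^(−t) dt. -/
noncomputable def upperGamma (s x : ℝ) : ℝ := ∫ t in Set.Ioi x, t ^ (s - 1) * Real.exp (-t)

/-!
By independence and Fubini, `P(G_F < G_B, G_B > a) = ∫_{x > a} F_F(x) dμ_B(x)`. Writing
`F_F = 1 - e^{-λ_F x} Σ_{i<m} (λ_F x)^i / i!`, the constant part integrates to `1 - F_B(a)`, and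
each remaining term times the density of `G_B` is a multiple of `x^{i+m-1} e^{-(λ_B+λ_F) x}`,
whose tail integral is `Γ(i+m, (λ_B+λ_F) a) / (λ_B+λ_F)^{i+m}` after substituting
`t = (λ_B+λ_F) x`. The tail `1 - F_B(a)` itself comes from the closed form
`Γ(k+1, x) = k! e^{-x} Σ_{i≤k} x^i / i!`, whose right side is an antiderivative of `-x^k e^{-x}`.
-/

open Set Filter
open scoped ENNReal Nat

lemma measure_lt_and_mem_eq_setLIntegral {Ω : Type*} [MeasurableSpace Ω] {P : Measure Ω}
    [IsFiniteMeasure P] {X Y : Ω → ℝ} (hX : Measurable X) (hY : Measurable Y)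
    (hXY : IndepFun X Y P) {s : Set ℝ} (hs : MeasurableSet s) :
    P {ω | Y ω < X ω ∧ X ω ∈ s} = ∫⁻ x in s, P.map Y (Iio x) ∂P.map X := by
  have hE : MeasurableSet {p : ℝ × ℝ | p.2 < p.1 ∧ p.1 ∈ s} :=
    (measurableSet_lt measurable_snd measurable_fst).inter (measurable_fst hs)
  have hjoint : P.map (fun ω => (X ω, Y ω)) = (P.map X).prod (P.map Y) :=
    (indepFun_iff_map_prod_eq_prod_map_map hX.aemeasurable hY.aemeasurable).mp hXY
  rw [show {ω | Y ω < X ω ∧ X ω ∈ s} = (fun ω => (X ω, Y ω)) ⁻¹' {p | p.2 < p.1 ∧ p.1 ∈ s}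
      from rfl, ← Measure.map_apply (hX.prodMk hY) hE, hjoint,
    Measure.prod_apply hE, ← lintegral_indicator hs]
  congr 1 with x
  by_cases hx : x ∈ s <;> simp [hx, Iio]

lemma integrableOn_Ioi_pow_mul_exp_neg_mul (n : ℕ) {r c : ℝ} (hr : 0 < r) (hc : 0 ≤ c) :
    IntegrableOn (fun x : ℝ => x ^ n * Real.exp (-(r * x))) (Ioi c) := by
  have h := integrableOn_rpow_mul_exp_neg_mul_rpow (s := n)
    (by linarith [n.cast_nonneg (α := ℝ)]) one_pos hr
  refine (h.mono_set (Ioi_subset_Ioi hc)).congr_fun (fun x _ => ?_) measurableSet_Ioi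
  simp only [Real.rpow_natCast, Real.rpow_one, neg_mul]

lemma integral_Ioi_pow_mul_exp_neg_mul (n : ℕ) {r : ℝ} (hr : 0 < r) (c : ℝ) :
    ∫ x in Ioi c, x ^ n * Real.exp (-(r * x)) = upperGamma (n + 1) (r * c) / r ^ (n + 1) := by
  have hscale : ∀ x : ℝ,
      x ^ n * Real.exp (-(r * x)) = (r ^ n)⁻¹ * ((r * x) ^ n * Real.exp (-(r * x))) := by
    intro x
    rw [mul_pow]
    field_simp
  simp_rw [hscale, integral_const_mul,
    integral_comp_mul_left_Ioi (fun t => t ^ n * Real.exp (-t)) c hr, upperGamma,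
    add_sub_cancel_right, Real.rpow_natCast, smul_eq_mul]
  field_simp
  ring

lemma hasDerivAt_exp_neg_mul_sum_pow_div_factorial (k : ℕ) (x : ℝ) :
    HasDerivAt (fun t : ℝ => Real.exp (-t) * ∑ i ∈ Finset.range (k + 1), t ^ i / (i ! : ℝ))
      (-(x ^ k * Real.exp (-x) / k !)) x := by
  have hsum : HasDerivAt (fun t : ℝ => ∑ i ∈ Finset.range (k + 1), t ^ i / (i ! : ℝ))
      (∑ i ∈ Finset.range k, x ^ i / (i ! : ℝ)) x := by
    induction k with
    | zero => simpa using hasDerivAt_const x (1 : ℝ)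
    | succ k ih =>
      rw [Finset.sum_range_succ]
      simp only [Finset.sum_range_succ _ (k + 1)]
      refine ih.fun_add (((hasDerivAt_pow (k + 1) x).div_const _).congr_deriv ?_)
      rw [Nat.factorial_succ]
      push_cast
      field_simp
  refine ((hasDerivAt_neg x).exp.mul hsum).congr_deriv ?_
  rw [Finset.sum_range_succ]
  ring

lemma tendsto_exp_neg_mul_sum_pow_div_factorial (k : ℕ) :
    Tendsto (fun t : ℝ => Real.exp (-t) * ∑ i ∈ Finset.range k, t ^ i / (i ! : ℝ)) atTop
      (nhds 0) := by
  simp_rw [Finset.mul_sum]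
  rw [← Finset.sum_const_zero (s := Finset.range k)]
  refine tendsto_finsetSum _ fun i _ => ?_
  have h := (Real.tendsto_pow_mul_exp_neg_atTop_nhds_zero i).div_const (i ! : ℝ)
  rw [zero_div] at h
  exact h.congr fun t => by ring

lemma upperGamma_natCast_add_one (k : ℕ) {x : ℝ} (hx : 0 ≤ x) :
    upperGamma (k + 1) x = k ! * (Real.exp (-x) * ∑ i ∈ Finset.range (k + 1), x ^ i / i !) := by
  have hint : IntegrableOn (fun t => -(t ^ k * Real.exp (-t) / k !)) (Ioi x) := by
    have h := ((integrableOn_Ioi_pow_mul_exp_neg_mul k one_pos hx).div_const (k ! : ℝ)).neg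
    simp only [one_mul, Pi.neg_def] at h
    exact h
  have hftc := integral_Ioi_of_hasDerivAt_of_tendsto'
    (fun t _ => hasDerivAt_exp_neg_mul_sum_pow_div_factorial k t) hint
    (tendsto_exp_neg_mul_sum_pow_div_factorial (k + 1))
  rw [integral_neg, integral_div, zero_sub, neg_inj] at hftc
  rw [upperGamma, add_sub_cancel_right]
  simp_rw [Real.rpow_natCast]
  rw [← hftc]
  field_simp

noncomputable def gammaDensity (m : ℕ) (l x : ℝ) : ℝ :=
  l ^ m * x ^ (m - 1) * Real.exp (-(l * x)) / Real.Gamma m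

section GammaLaw

variable {m : ℕ} {l a : ℝ}

lemma gammaDensity_nonneg (hl : 0 ≤ l) {x : ℝ} (hx : 0 ≤ x) : 0 ≤ gammaDensity m l x := by
  unfold gammaDensity
  have := Real.Gamma_nonneg_of_nonneg (m.cast_nonneg (α := ℝ))
  positivity

lemma gammaCDF_nonneg (hl : 0 ≤ l) {x : ℝ} (hx : 0 ≤ x) : 0 ≤ gammaCDF m l x := by
  have hsum := Real.sum_le_exp_of_nonneg (mul_nonneg hl hx) m
  have := mul_le_mul_of_nonneg_left hsum (Real.exp_pos (-(l * x))).le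
  rw [← Real.exp_add, neg_add_cancel, Real.exp_zero] at this
  unfold gammaCDF
  linarith

lemma one_sub_gammaCDF_nonneg (hl : 0 ≤ l) {x : ℝ} (hx : 0 ≤ x) : 0 ≤ 1 - gammaCDF m l x := by
  rw [gammaCDF, sub_sub_cancel]
  positivity

lemma gammaCDF_zero (hm : 1 ≤ m) : gammaCDF m l 0 = 0 := by
  obtain ⟨k, rfl⟩ := Nat.exists_eq_add_of_le' hm
  simp [gammaCDF, Finset.sum_range_succ']

lemma integrableOn_Ioi_gammaDensity (hl : 0 < l) (ha : 0 ≤ a) :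
    IntegrableOn (gammaDensity m l) (Ioi a) :=
  IntegrableOn.congr_fun
    ((integrableOn_Ioi_pow_mul_exp_neg_mul (m - 1) hl ha).const_mul (l ^ m / Real.Gamma m))
    (fun x _ => by rw [gammaDensity]; ring) measurableSet_Ioi

lemma integral_Ioi_gammaDensity (hm : 1 ≤ m) (hl : 0 < l) (ha : 0 ≤ a) :
    ∫ x in Ioi a, gammaDensity m l x = 1 - gammaCDF m l a := by
  obtain ⟨k, rfl⟩ := Nat.exists_eq_add_of_le' hm
  have hdens :
      gammaDensity (k + 1) l = fun x => l ^ (k + 1) / k ! * (x ^ k * Real.exp (-(l * x))) := by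
    ext x
    rw [gammaDensity, Nat.add_sub_cancel, Nat.cast_add_one, Real.Gamma_nat_eq_factorial]
    ring
  rw [hdens, integral_const_mul, integral_Ioi_pow_mul_exp_neg_mul k hl,
    upperGamma_natCast_add_one k (by positivity), gammaCDF, sub_sub_cancel]
  field_simp

lemma setLIntegral_gammaLaw_ofReal (hl : 0 ≤ l) {s : Set ℝ} (hs : MeasurableSet s)
    (hs0 : s ⊆ Ioi 0) {g : ℝ → ℝ} (hg : Measurable g) :
    ∫⁻ x in s, ENNReal.ofReal (g x) ∂gammaLaw m l =
      ∫⁻ x in s, ENNReal.ofReal (gammaDensity m l x * g x) := by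
  rw [gammaLaw, setLIntegral_withDensity_eq_setLIntegral_mul _
    ((Measurable.ite (measurableSet_lt measurable_const measurable_id') (by fun_prop)
      measurable_const).ennreal_ofReal) hg.ennreal_ofReal hs]
  refine setLIntegral_congr_fun hs fun x hx => ?_
  rw [Pi.mul_apply, if_pos (show 0 < x from hs0 hx), ← gammaDensity,
    ← ENNReal.ofReal_mul (gammaDensity_nonneg hl (hs0 hx).le)]

lemma gammaLaw_Ioi (hm : 1 ≤ m) (hl : 0 < l) (ha : 0 ≤ a) :
    gammaLaw m l (Ioi a) = ENNReal.ofReal (1 - gammaCDF m l a) := by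
  have h := setLIntegral_gammaLaw_ofReal (m := m) hl.le measurableSet_Ioi (Ioi_subset_Ioi ha)
    (measurable_const (a := (1 : ℝ)))
  simp only [ENNReal.ofReal_one, setLIntegral_one, mul_one] at h
  rw [h, ← ofReal_integral_eq_lintegral_ofReal (integrableOn_Ioi_gammaDensity hl ha)
    ((ae_restrict_iff' measurableSet_Ioi).2 (.of_forall fun x hx =>
      gammaDensity_nonneg hl.le (ha.trans (le_of_lt hx)))), integral_Ioi_gammaDensity hm hl ha]

lemma gammaLaw_Iic_zero : gammaLaw m l (Iic 0) = 0 := by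
  rw [gammaLaw, withDensity_apply _ measurableSet_Iic, setLIntegral_congr_fun measurableSet_Iic
    (g := fun _ => 0) fun x (hx : x ≤ 0) => by rw [if_neg (not_lt.2 hx), ENNReal.ofReal_zero],
    lintegral_zero]

lemma isProbabilityMeasure_gammaLaw (hm : 1 ≤ m) (hl : 0 < l) :
    IsProbabilityMeasure (gammaLaw m l) := by
  constructor
  rw [← Iic_union_Ioi (a := (0 : ℝ)), measure_union (Iic_disjoint_Ioi le_rfl) measurableSet_Ioi,
    gammaLaw_Iic_zero, gammaLaw_Ioi hm hl le_rfl, gammaCDF_zero hm, zero_add, sub_zero,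
    ENNReal.ofReal_one]

lemma gammaLaw_Iio (hm : 1 ≤ m) (hl : 0 < l) {x : ℝ} (hx : 0 ≤ x) :
    gammaLaw m l (Iio x) = ENNReal.ofReal (gammaCDF m l x) := by
  have := isProbabilityMeasure_gammaLaw hm hl
  have hatom : gammaLaw m l {x} = 0 := withDensity_absolutelyContinuous _ _ (measure_singleton x)
  rw [← compl_Ici, prob_compl_eq_one_sub measurableSet_Ici, ← measure_congr (Ioi_ae_eq_Ici' hatom),
    gammaLaw_Ioi hm hl hx, ← ENNReal.ofReal_one,
    ← ENNReal.ofReal_sub _ (one_sub_gammaCDF_nonneg hl.le hx), sub_sub_cancel]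

end GammaLaw

section Comparison

variable {m : ℕ} {lB lF a : ℝ}

lemma gammaDensity_mul_one_sub_gammaCDF (x : ℝ) :
    gammaDensity m lB x * (1 - gammaCDF m lF x) =
      ∑ i ∈ Finset.range m, lB ^ m * lF ^ i / (Real.Gamma m * i !) *
        (x ^ (i + m - 1) * Real.exp (-((lB + lF) * x))) := by
  rw [gammaDensity, gammaCDF, sub_sub_cancel, Finset.mul_sum, Finset.mul_sum]
  refine Finset.sum_congr rfl fun i hi => ?_
  have := Finset.mem_range.1 hi
  rw [show i + m - 1 = (m - 1) + i by omega, pow_add, mul_pow, add_mul, neg_add, Real.exp_add]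
  ring

lemma integrableOn_Ioi_gammaDensity_mul_one_sub_gammaCDF (hlB : 0 < lB) (hlF : 0 < lF)
    (ha : 0 ≤ a) :
    IntegrableOn (fun x => gammaDensity m lB x * (1 - gammaCDF m lF x)) (Ioi a) := by
  simp_rw [gammaDensity_mul_one_sub_gammaCDF]
  exact integrable_finsetSum _ fun i _ =>
    (integrableOn_Ioi_pow_mul_exp_neg_mul _ (add_pos hlB hlF) ha).const_mul _

lemma integrableOn_Ioi_gammaDensity_mul_gammaCDF (hlB : 0 < lB) (hlF : 0 < lF) (ha : 0 ≤ a) :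
    IntegrableOn (fun x => gammaDensity m lB x * gammaCDF m lF x) (Ioi a) :=
  IntegrableOn.congr_fun ((integrableOn_Ioi_gammaDensity (m := m) hlB ha).sub
    (integrableOn_Ioi_gammaDensity_mul_one_sub_gammaCDF hlB hlF ha))
    (fun x _ => by simp only [Pi.sub_apply]; ring)
    measurableSet_Ioi

lemma integral_Ioi_gammaDensity_mul_one_sub_gammaCDF (hlB : 0 < lB) (hlF : 0 < lF)
    (ha : 0 ≤ a) :
    ∫ x in Ioi a, gammaDensity m lB x * (1 - gammaCDF m lF x) =
      lB ^ m / Real.Gamma m * ∑ i ∈ Finset.range m,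
        lF ^ i / (i ! * (lB + lF) ^ (i + m)) * upperGamma (i + m) ((lB + lF) * a) := by
  simp_rw [gammaDensity_mul_one_sub_gammaCDF]
  rw [integral_finsetSum _ fun i _ =>
    (integrableOn_Ioi_pow_mul_exp_neg_mul _ (add_pos hlB hlF) ha).const_mul _, Finset.mul_sum]
  refine Finset.sum_congr rfl fun i hi => ?_
  have hpos : 1 ≤ i + m := by have := Finset.mem_range.1 hi; omega
  rw [integral_const_mul, integral_Ioi_pow_mul_exp_neg_mul _ (add_pos hlB hlF),
    Nat.sub_add_cancel hpos, Nat.cast_sub hpos, Nat.cast_add, Nat.cast_one, sub_add_cancel]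
  ring

lemma integral_Ioi_gammaDensity_mul_gammaCDF (hm : 1 ≤ m) (hlB : 0 < lB) (hlF : 0 < lF)
    (ha : 0 ≤ a) :
    ∫ x in Ioi a, gammaDensity m lB x * gammaCDF m lF x =
      1 - gammaCDF m lB a - lB ^ m / Real.Gamma m * ∑ i ∈ Finset.range m,
        lF ^ i / (i ! * (lB + lF) ^ (i + m)) * upperGamma (i + m) ((lB + lF) * a) := by
  rw [← integral_Ioi_gammaDensity hm hlB ha,
    ← integral_Ioi_gammaDensity_mul_one_sub_gammaCDF hlB hlF ha,
    ← integral_sub (integrableOn_Ioi_gammaDensity hlB ha)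
      (integrableOn_Ioi_gammaDensity_mul_one_sub_gammaCDF hlB hlF ha)]
  congr 1 with x
  ring

end Comparison

/-- Let m ≥ 1 be an integer, λ_B, λ_F > 0, and let G_B, G_F be independent Gamma
random variables with shape m and rates λ_B, λ_F respectively. For every a ≥ 0:
P(G_F < G_B and G_B > a)
  = 1 − F_B(a) − (λ_B^m/Γ(m)) Σ_{i=0}^{m−1} (λ_F^i/(i!·A2^{i+m})) Γ(i+m, A2·a),
where A2 = λ_B + λ_F and F_B is the CDF of G_B. -/
theorem stmt_8 {Ω : Type*} [MeasurableSpace Ω] (P : Measure Ω) [IsProbabilityMeasure P]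
    (m : ℕ) (hm : 1 ≤ m) (lB lF : ℝ) (hlB : 0 < lB) (hlF : 0 < lF)
    (GB GF : Ω → ℝ) (hGB : Measurable GB) (hGF : Measurable GF)
    (hBlaw : P.map GB = gammaLaw m lB) (hFlaw : P.map GF = gammaLaw m lF)
    (hindep : IndepFun GB GF P) :
    ∀ a : ℝ, 0 ≤ a →
      (P {ω | GF ω < GB ω ∧ a < GB ω}).toReal =
        1 - gammaCDF m lB a -
          lB ^ m / Real.Gamma m *
            ∑ i ∈ Finset.range m,
              lF ^ i / ((Nat.factorial i : ℝ) * (lB + lF) ^ (i + m)) *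
                upperGamma (i + m) ((lB + lF) * a) := by
  intro a ha
  have hevent : P {ω | GF ω < GB ω ∧ a < GB ω} =
      ∫⁻ x in Ioi a, ENNReal.ofReal (gammaCDF m lF x) ∂gammaLaw m lB := by
    rw [← hBlaw, ← setLIntegral_congr_fun measurableSet_Ioi
      fun x (hx : a < x) => gammaLaw_Iio hm hlF (ha.trans hx.le), ← hFlaw]
    exact measure_lt_and_mem_eq_setLIntegral hGB hGF hindep measurableSet_Ioi
  have hnonneg : ∀ x ∈ Ioi a, 0 ≤ gammaDensity m lB x * gammaCDF m lF x := fun x hx =>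
    mul_nonneg (gammaDensity_nonneg hlB.le (ha.trans (le_of_lt hx)))
      (gammaCDF_nonneg hlF.le (ha.trans (le_of_lt hx)))
  rw [hevent, setLIntegral_gammaLaw_ofReal hlB.le measurableSet_Ioi (Ioi_subset_Ioi ha)
      (by unfold gammaCDF; fun_prop),
    ← ofReal_integral_eq_lintegral_ofReal (integrableOn_Ioi_gammaDensity_mul_gammaCDF hlB hlF ha)
      ((ae_restrict_iff' measurableSet_Ioi).2 (.of_forall hnonneg)),
    ENNReal.toReal_ofReal (setIntegral_nonneg measurableSet_Ioi hnonneg)]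
  exact integral_Ioi_gammaDensity_mul_gammaCDF hm hlB hlF ha
end

section
/- Let m ≥ 1 be an integer, λ_B, λ_F > 0, and let G_B, G_F be independent Gamma random variables with shape m and rates λ_B, λ_F respectively. Then P(G_F < G_B) = 1 − (λ_B^m/Γ(m)) · Σ_{i=0}^{m−1} λ_F^i · Γ(i+m) / (i! · (λ_B + λ_F)^{i+m}). -/
open MeasureTheory ProbabilityTheory

/-! By independence, `P(G_B ≤ G_F) = E[S(G_B)]` where `S(x) = P(G_F ≥ x)`. For integer shape `m`
the tail is `S(x) = e^{-λ_F x} ∑_{k<m} (λ_F x)^k / k!`, since its derivative is minus the Gamma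
density and it vanishes at infinity. Multiplying by the density of `G_B` and expanding the sum,
each term is a Gamma integral `∫_0^∞ x^{m-1+k} e^{-(λ_B+λ_F) x} dx = Γ(m+k) / (λ_B+λ_F)^{m+k}`;
finally `P(G_F < G_B) = 1 - P(G_B ≤ G_F)`. -/

open Real Set Filter Topology Finset Nat

lemma ProbabilityTheory.IndepFun.measure_le_eq_lintegral {Ω : Type*} [MeasurableSpace Ω]
    {P : Measure Ω} [IsFiniteMeasure P] {X Y : Ω → ℝ} (hXY : IndepFun X Y P)
    (hX : Measurable X) (hY : Measurable Y) :
    P {ω | X ω ≤ Y ω} = ∫⁻ x, P.map Y (Ici x) ∂P.map X := by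
  have hs : MeasurableSet {p : ℝ × ℝ | p.1 ≤ p.2} := measurableSet_le measurable_fst measurable_snd
  rw [show {ω | X ω ≤ Y ω} = (fun ω => (X ω, Y ω)) ⁻¹' {p | p.1 ≤ p.2} from rfl,
    ← Measure.map_apply (hX.prodMk hY) hs,
    (indepFun_iff_map_prod_eq_prod_map_map hX.aemeasurable hY.aemeasurable).1 hXY,
    Measure.prod_apply hs]
  rfl

lemma integrableOn_pow_mul_exp_neg_mul_Ioi (n : ℕ) {r : ℝ} (hr : 0 < r) :
    IntegrableOn (fun x : ℝ => x ^ n * exp (-(r * x))) (Ioi 0) := by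
  simpa [Real.rpow_natCast] using integrableOn_rpow_mul_exp_neg_mul_rpow (p := 1) (s := n)
    (by linarith [n.cast_nonneg (α := ℝ)]) one_pos hr

lemma integral_pow_mul_exp_neg_mul_Ioi (n : ℕ) {r : ℝ} (hr : 0 < r) :
    ∫ x in Ioi (0 : ℝ), x ^ n * exp (-(r * x)) = n ! / r ^ (n + 1) := by
  have h := integral_rpow_mul_exp_neg_mul_Ioi (a := n + 1) (by positivity) hr
  rw [add_sub_cancel_right, Real.Gamma_nat_eq_factorial, ← Nat.cast_succ, Real.rpow_natCast,
    div_pow, one_pow, one_div_mul_eq_div] at h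
  simpa [Real.rpow_natCast] using h

noncomputable def erlangTail (m : ℕ) (l x : ℝ) : ℝ :=
  exp (-(l * x)) * ∑ k ∈ range m, (l * x) ^ k / k !

lemma erlangTail_succ (m : ℕ) (l x : ℝ) :
    erlangTail (m + 1) l x = erlangTail m l x + (l * x) ^ m / m ! * exp (-(l * x)) := by
  simp only [erlangTail, sum_range_succ]
  ring

lemma hasDerivAt_erlangTail (n : ℕ) (l x : ℝ) :
    HasDerivAt (erlangTail (n + 1) l) (-(l ^ (n + 1) / n ! * (x ^ n * exp (-(l * x))))) x := by
  have hexp : HasDerivAt (fun y => exp (-(l * y))) (-l * exp (-(l * x))) x := by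
    simpa [mul_comm] using ((hasDerivAt_id x).const_mul l).neg.exp
  induction n with
  | zero =>
    have h1 : erlangTail 1 l = fun y => exp (-(l * y)) := by funext y; simp [erlangTail]
    rw [h1]
    convert hexp using 1
    simp
  | succ n ih =>
    have hpow : HasDerivAt (fun y => (l * y) ^ (n + 1) / (n + 1)!)
        (l ^ (n + 1) / n ! * x ^ n) x := by
      refine ((((hasDerivAt_id x).const_mul l).pow (n + 1)).div_const _).congr_deriv ?_
      rw [Nat.factorial_succ, Nat.cast_mul, Nat.add_sub_cancel, id, mul_one, mul_pow]
      field_simp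
      ring
    have hsucc : erlangTail (n + 2) l =
        erlangTail (n + 1) l + (fun y => (l * y) ^ (n + 1) / (n + 1)!) * fun y => exp (-(l * y)) :=
      funext fun y => erlangTail_succ _ _ _
    rw [hsucc]
    refine (ih.add (hpow.mul hexp)).congr_deriv ?_
    rw [mul_pow]
    ring

lemma tendsto_erlangTail_atTop (m : ℕ) {l : ℝ} (hl : 0 < l) :
    Tendsto (erlangTail m l) atTop (𝓝 0) := by
  have h : ∀ k, Tendsto (fun x => (l * x) ^ k * exp (-(l * x)) / k !) atTop (𝓝 0) := fun k => by
    simpa using ((tendsto_pow_mul_exp_neg_atTop_nhds_zero k).comp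
      (tendsto_id.const_mul_atTop hl)).div_const (k ! : ℝ)
  have hsum := tendsto_finsetSum (range m) fun k _ => h k
  rw [sum_const_zero] at hsum
  refine hsum.congr fun x => ?_
  simp only [erlangTail, mul_sum]
  exact sum_congr rfl fun k _ => by ring

lemma gammaLaw_eq_withDensity (n : ℕ) (l : ℝ) :
    gammaLaw (n + 1) l = (volume.restrict (Ioi 0)).withDensity
      fun x => ENNReal.ofReal (l ^ (n + 1) / n ! * (x ^ n * exp (-(l * x)))) := by
  rw [gammaLaw, ← withDensity_indicator measurableSet_Ioi]
  congr 1
  funext x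
  by_cases hx : 0 < x
  · simp only [if_pos hx, indicator_of_mem (Set.mem_Ioi.2 hx), Nat.cast_succ,
      Real.Gamma_nat_eq_factorial, Nat.add_sub_cancel]
    ring_nf
  · simp [hx]

lemma integral_Ioi_pow_mul_exp_neg_mul_eq_erlangTail (n : ℕ) {l x : ℝ} (hl : 0 < l) (hx : 0 ≤ x) :
    ∫ y in Ioi x, l ^ (n + 1) / n ! * (y ^ n * exp (-(l * y))) = erlangTail (n + 1) l x := by
  have hint : IntegrableOn (fun y => l ^ (n + 1) / n ! * (y ^ n * exp (-(l * y)))) (Ioi x) :=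
    IntegrableOn.mono_set ((integrableOn_pow_mul_exp_neg_mul_Ioi n hl).const_mul _)
      (Ioi_subset_Ioi hx)
  have h := integral_Ioi_of_hasDerivAt_of_tendsto' (f := -erlangTail (n + 1) l) (m := 0)
    (fun y _ => by simpa using (hasDerivAt_erlangTail n l y).neg) hint
    (by rw [← neg_zero]; exact (tendsto_erlangTail_atTop (n + 1) hl).neg)
  simpa using h

lemma gammaLaw_Ici (n : ℕ) {l x : ℝ} (hl : 0 < l) (hx : 0 < x) :
    gammaLaw (n + 1) l (Ici x) = ENNReal.ofReal (erlangTail (n + 1) l x) := by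
  rw [gammaLaw_eq_withDensity, withDensity_apply _ measurableSet_Ici,
    Measure.restrict_restrict measurableSet_Ici, inter_eq_left.2 (Ici_subset_Ioi.2 hx),
    ← integral_Ioi_pow_mul_exp_neg_mul_eq_erlangTail n hl hx.le, ← integral_Ici_eq_integral_Ioi,
    ofReal_integral_eq_lintegral_ofReal]
  · exact IntegrableOn.mono_set ((integrableOn_pow_mul_exp_neg_mul_Ioi n hl).const_mul _)
      (Ici_subset_Ioi.2 hx)
  · filter_upwards [ae_restrict_mem measurableSet_Ici] with y hy
    have : 0 < y := hx.trans_le hy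
    positivity

lemma erlangTail_nonneg (m : ℕ) {l x : ℝ} (hl : 0 ≤ l) (hx : 0 ≤ x) : 0 ≤ erlangTail m l x := by
  unfold erlangTail
  positivity

lemma pow_mul_exp_mul_erlangTail (n m : ℕ) (a b x : ℝ) :
    x ^ n * exp (-(a * x)) * erlangTail m b x =
      ∑ k ∈ range m, b ^ k / k ! * (x ^ (n + k) * exp (-((a + b) * x))) := by
  simp only [erlangTail, mul_sum]
  refine sum_congr rfl fun k _ => ?_
  rw [pow_add, mul_pow, add_mul, neg_add, exp_add]
  ring

lemma integrableOn_pow_mul_exp_mul_erlangTail (n m : ℕ) {a b : ℝ} (ha : 0 < a) (hb : 0 < b) :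
    IntegrableOn (fun x => x ^ n * exp (-(a * x)) * erlangTail m b x) (Ioi 0) := by
  simp_rw [pow_mul_exp_mul_erlangTail]
  exact integrable_finsetSum _ fun k _ =>
    (integrableOn_pow_mul_exp_neg_mul_Ioi (n + k) (add_pos ha hb)).const_mul _

lemma integral_pow_mul_exp_mul_erlangTail (n m : ℕ) {a b : ℝ} (ha : 0 < a) (hb : 0 < b) :
    ∫ x in Ioi 0, x ^ n * exp (-(a * x)) * erlangTail m b x =
      ∑ k ∈ range m, b ^ k * (k + n)! / (k ! * (a + b) ^ (k + n + 1)) := by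
  simp_rw [pow_mul_exp_mul_erlangTail]
  rw [integral_finsetSum _ fun k _ =>
    (integrableOn_pow_mul_exp_neg_mul_Ioi (n + k) (add_pos ha hb)).const_mul _]
  refine sum_congr rfl fun k _ => ?_
  rw [integral_const_mul, integral_pow_mul_exp_neg_mul_Ioi _ (add_pos ha hb), add_comm n k]
  field_simp

lemma lintegral_gammaLaw_Ici (n : ℕ) {a b : ℝ} (ha : 0 < a) (hb : 0 < b) :
    ∫⁻ x, gammaLaw (n + 1) b (Ici x) ∂gammaLaw (n + 1) a =
      ENNReal.ofReal (a ^ (n + 1) / n ! *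
        ∑ k ∈ range (n + 1), b ^ k * (k + n)! / (k ! * (a + b) ^ (k + n + 1))) := by
  rw [gammaLaw_eq_withDensity n a, lintegral_withDensity_eq_lintegral_mul_non_measurable _
    (by fun_prop) (ae_of_all _ fun _ => ENNReal.ofReal_lt_top),
    ← integral_pow_mul_exp_mul_erlangTail n (n + 1) ha hb, ← integral_const_mul,
    ofReal_integral_eq_lintegral_ofReal
      ((integrableOn_pow_mul_exp_mul_erlangTail n (n + 1) ha hb).const_mul _)]
  · refine setLIntegral_congr_fun measurableSet_Ioi fun x hx => ?_
    have : 0 < x := hx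
    rw [Pi.mul_apply, gammaLaw_Ici n hb hx, ← ENNReal.ofReal_mul (by positivity), mul_assoc]
  · filter_upwards [ae_restrict_mem measurableSet_Ioi] with x hx
    have : 0 < x := hx
    have := erlangTail_nonneg (n + 1) hb.le this.le
    positivity

/-- Let m ≥ 1 be an integer, λ_B, λ_F > 0, and let G_B, G_F be independent Gamma
random variables with shape m and rates λ_B, λ_F respectively. Then
P(G_F < G_B) = 1 − (λ_B^m/Γ(m)) Σ_{i=0}^{m−1} λ_F^i Γ(i+m)/(i!(λ_B + λ_F)^{i+m}). -/
theorem stmt_9 {Ω : Type*} [MeasurableSpace Ω] (P : Measure Ω) [IsProbabilityMeasure P]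
    (m : ℕ) (hm : 1 ≤ m) (lB lF : ℝ) (hlB : 0 < lB) (hlF : 0 < lF)
    (GB GF : Ω → ℝ) (hGB : Measurable GB) (hGF : Measurable GF)
    (hBlaw : P.map GB = gammaLaw m lB) (hFlaw : P.map GF = gammaLaw m lF)
    (hindep : IndepFun GB GF P) :
    (P {ω | GF ω < GB ω}).toReal =
      1 - lB ^ m / Real.Gamma m *
        ∑ i ∈ Finset.range m,
          lF ^ i * Real.Gamma (i + m) / ((Nat.factorial i : ℝ) * (lB + lF) ^ (i + m)) := by
  obtain ⟨n, rfl⟩ : ∃ n, m = n + 1 := ⟨m - 1, by omega⟩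
  have hcompl : {ω | GF ω < GB ω} = {ω | GB ω ≤ GF ω}ᶜ := by ext; simp
  rw [hcompl, prob_compl_eq_one_sub (measurableSet_le hGB hGF),
    ENNReal.toReal_sub_of_le prob_le_one ENNReal.one_ne_top, ENNReal.toReal_one,
    hindep.measure_le_eq_lintegral hGB hGF, hBlaw, hFlaw, lintegral_gammaLaw_Ici n hlB hlF,
    ENNReal.toReal_ofReal (by positivity)]
  simp_rw [Nat.cast_succ, ← add_assoc, ← Nat.cast_add, Real.Gamma_nat_eq_factorial]
end

section
/- Let ρ > 0, Θ_B > 1 and ε1 = (Θ_B − 1)/ρ. Let g_B > ε1 and ε1 < g_F < g_B. Set ω̄ = (ρg_B − (Θ_B − 1))/(ρΘ_B g_B), ω = 1 − ω̄, and ω̄₂ = (ρg_F − (Θ_B − 1))/(ρΘ_B g_F). Then log₂(1 + ρω̄g_F/(1 + ρωg_F)) < log₂(1 + ρω̄₂g_F) if and only if g_F > Θ_B g_B/(ρg_B + 1). Moreover, Θ_B g_B/(ρg_B + 1) > ε1 whenever g_B > ε1. -/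
/-!
With `t = Θ_B - 1`, the grant-free SINRs simplify to
`(ρ g_B - t) g_F / (Θ_B g_B + t (ρ g_B + 1) g_F)` under FPA and to `(ρ g_F - t) / Θ_B` under
the raised coefficient. Since `log₂ (1 + ·)` is strictly increasing, the rates compare as these
SINRs do, and after cross-multiplying their difference factors as
`t (ρ g_F + 1) ((ρ g_B + 1) g_F - Θ_B g_B)`, whose sign is that of the last factor.
-/

lemma sinr_fixed_eq {ρ Θ gB gF : ℝ} (hρ : ρ ≠ 0) (hΘ : Θ ≠ 0) (hgB : gB ≠ 0) :
    ρ * ((ρ * gB - (Θ - 1)) / (ρ * Θ * gB)) * gF /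
        (1 + ρ * (1 - (ρ * gB - (Θ - 1)) / (ρ * Θ * gB)) * gF) =
      (ρ * gB - (Θ - 1)) * gF / (Θ * gB + (Θ - 1) * (ρ * gB + 1) * gF) := by
  have hden : 1 + ρ * (1 - (ρ * gB - (Θ - 1)) / (ρ * Θ * gB)) * gF =
      (Θ * gB + (Θ - 1) * (ρ * gB + 1) * gF) / (Θ * gB) := by
    field_simp
    ring
  rw [hden, div_div_eq_mul_div]
  field_simp

lemma sinr_dynamic_eq {ρ Θ g : ℝ} (hρ : ρ ≠ 0) (hg : g ≠ 0) :
    ρ * ((ρ * g - (Θ - 1)) / (ρ * Θ * g)) * g = (ρ * g - (Θ - 1)) / Θ := by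
  rw [mul_right_comm, mul_div_assoc', mul_right_comm ρ Θ, mul_div_mul_left _ _ (mul_ne_zero hρ hg)]

lemma sinr_fixed_lt_sinr_dynamic_iff {ρ Θ gB gF : ℝ} (hρ : 0 < ρ) (hΘ : 1 < Θ) (hgB : 0 < gB)
    (hgF : 0 < gF) :
    (ρ * gB - (Θ - 1)) * gF / (Θ * gB + (Θ - 1) * (ρ * gB + 1) * gF) < (ρ * gF - (Θ - 1)) / Θ ↔
      Θ * gB / (ρ * gB + 1) < gF := by
  have hΘ₀ : 0 < Θ := by linarith
  have hgap : (ρ * gF - (Θ - 1)) * (Θ * gB + (Θ - 1) * (ρ * gB + 1) * gF)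
      - (ρ * gB - (Θ - 1)) * gF * Θ = (Θ - 1) * (ρ * gF + 1) * ((ρ * gB + 1) * gF - Θ * gB) := by
    ring
  have hcoef : 0 < (Θ - 1) * (ρ * gF + 1) := mul_pos (by linarith) (by positivity)
  rw [div_lt_div_iff₀ (by positivity) hΘ₀, div_lt_iff₀ (by positivity),
    ← sub_pos, hgap, mul_pos_iff_of_pos_left hcoef, sub_pos, mul_comm gF]

lemma sub_one_div_lt_mul_div_mul_add_one {ρ Θ g : ℝ} (hρ : 0 < ρ) (hΘ : 0 < Θ) (hg : (Θ - 1) / ρ < g) :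
    (Θ - 1) / ρ < Θ * g / (ρ * g + 1) := by
  rw [div_lt_iff₀' hρ] at hg
  rw [div_lt_div_iff₀ hρ (by linarith)]
  nlinarith

theorem stmt_13_general (ρ ΘB gB gF : ℝ) (hρ : 0 < ρ) (hΘB : 1 < ΘB)
    (hgB : (ΘB - 1) / ρ < gB) (hgF1 : (ΘB - 1) / ρ < gF) :
    (Real.logb 2 (1 + ρ * ((ρ * gB - (ΘB - 1)) / (ρ * ΘB * gB)) * gF /
        (1 + ρ * (1 - (ρ * gB - (ΘB - 1)) / (ρ * ΘB * gB)) * gF)) <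
      Real.logb 2 (1 + ρ * ((ρ * gF - (ΘB - 1)) / (ρ * ΘB * gF)) * gF) ↔
        ΘB * gB / (ρ * gB + 1) < gF) ∧
    ∀ g : ℝ, (ΘB - 1) / ρ < g → (ΘB - 1) / ρ < ΘB * g / (ρ * g + 1) := by
  have hε : 0 < (ΘB - 1) / ρ := div_pos (by linarith) hρ
  have hgB₀ : 0 < gB := hε.trans hgB
  have hgF₀ : 0 < gF := hε.trans hgF1
  rw [div_lt_iff₀' hρ] at hgB hgF1
  refine ⟨?_, fun g => sub_one_div_lt_mul_div_mul_add_one hρ (by linarith)⟩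
  rw [sinr_fixed_eq hρ.ne' (by linarith) hgB₀.ne', sinr_dynamic_eq hρ.ne' hgF₀.ne',
    Real.logb_lt_logb_iff one_lt_two (by positivity) (by positivity), add_lt_add_iff_left,
    sinr_fixed_lt_sinr_dynamic_iff hρ hΘB hgB₀ hgF₀]

/-- Let ρ > 0, Θ_B > 1 and ε1 = (Θ_B − 1)/ρ. Let g_B > ε1 and ε1 < g_F < g_B.
Set ω̄ = (ρg_B − (Θ_B − 1))/(ρΘ_B g_B), ω = 1 − ω̄, and ω̄₂ = (ρg_F − (Θ_B − 1))/(ρΘ_B g_F).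
Then log₂(1 + ρω̄g_F/(1 + ρωg_F)) < log₂(1 + ρω̄₂g_F) iff g_F > Θ_B g_B/(ρg_B + 1).
Moreover, Θ_B g_B/(ρg_B + 1) > ε1 whenever g_B > ε1. -/
theorem stmt_13 (ρ ΘB gB gF : ℝ) (hρ : 0 < ρ) (hΘB : 1 < ΘB)
    (hgB : (ΘB - 1) / ρ < gB) (hgF1 : (ΘB - 1) / ρ < gF) (hgF2 : gF < gB) :
    (Real.logb 2 (1 + ρ * ((ρ * gB - (ΘB - 1)) / (ρ * ΘB * gB)) * gF /
        (1 + ρ * (1 - (ρ * gB - (ΘB - 1)) / (ρ * ΘB * gB)) * gF)) <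
      Real.logb 2 (1 + ρ * ((ρ * gF - (ΘB - 1)) / (ρ * ΘB * gF)) * gF) ↔
        ΘB * gB / (ρ * gB + 1) < gF) ∧
    ∀ g : ℝ, (ΘB - 1) / ρ < g → (ΘB - 1) / ρ < ΘB * g / (ρ * g + 1) :=
  stmt_13_general ρ ΘB gB gF hρ hΘB hgB hgF1
end

section
/- Assume ρ > 0, Θ_B > 1 and 1 < Θ_th < Θ_B/(Θ_B − 1). With ε1 = (Θ_B − 1)/ρ, ε2 = Θ_B(Θ_th − 1)/ρ, ε0 = ε1 + ε2, ε3 = (Θ_B − 1)Θ_th/(ρ(Θ_th − (Θ_th − 1)Θ_B)), ε4 = Θ_B(Θ_th − 1)/(ρ(Θ_B − Θ_th(Θ_B − 1))), ε5 = ε3 + ε4, and the FPA grant-free rate R_F(g_B, g_F) defined below, the following holds for independent Gamma random variables G_B, G_F with integer shape m ≥ 1 and rates λ_B, λ_F > 0: P(G_B ≤ ε1) + P(G_B > ε1 and R_F(G_B, G_F) < log₂ Θ_th) = P(G_B ≤ ε1) + P(ε1 < G_B < ε0 and G_B < G_F < ε2 G_B/(G_B − ε1)) + P(G_F < G_B and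 ε1 < G_B < ε5) + P(G_B > ε5 and G_F < ε4 G_B/(G_B − ε3)). -/
open MeasureTheory ProbabilityTheory

/-- The FPA power allocation coefficient of the grant-based user:
ω(g_B) = min{(ρg_B + 1)(Θ_B − 1)/(ρg_B Θ_B), 1}. -/
noncomputable def omegaFPA (ρ ΘB gB : ℝ) : ℝ :=
  min ((ρ * gB + 1) * (ΘB - 1) / (ρ * gB * ΘB)) 1

/-- The grant-free achievable rate under the FPA scheme: with ω = ω(g_B) and ω̄ = 1 − ω,
R_F(g_B, g_F) = log₂(1 + ω̄ρg_F) if g_F > g_B (first-stage SIC) and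
R_F(g_B, g_F) = log₂(1 + ω̄ρg_F/(1 + ωρg_F)) if g_F ≤ g_B (second-stage SIC). -/
noncomputable def rateF (ρ ΘB gB gF : ℝ) : ℝ :=
  if gB < gF then Real.logb 2 (1 + (1 - omegaFPA ρ ΘB gB) * ρ * gF)
  else Real.logb 2 (1 + (1 - omegaFPA ρ ΘB gB) * ρ * gF / (1 + omegaFPA ρ ΘB gB * ρ * gF))

/-!
For `g_B > ε1` the allocation `ω(g_B)` lies strictly below `1`, with
`1 - ω = (g_B - ε1)/(g_B Θ_B)`. The outage condition `R_F < log₂ Θ_th` then becomes an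
inequality linear in `g_F`: `g_F (g_B - ε1) < ε2 g_B` in the first SIC stage (`g_F > g_B`) and
`g_F (g_B - ε3) < ε4 g_B` in the second (`g_F ≤ g_B`). Solving these for `g_F` splits the outage
event into the three disjoint regions on the right, up to the null events `{G_F ≤ 0}`,
`{G_B = ε5}` and `{G_B = G_F}`; the last is null because `G_F` has no atoms and is independent
of `G_B`.
-/

instance nullSingletonClass_gammaLaw (m : ℕ) (l : ℝ) : NullSingletonClass (gammaLaw m l) := by
  unfold gammaLaw; infer_instance

lemma ae_gammaLaw_pos (m : ℕ) (l : ℝ) : ∀ᵐ x ∂gammaLaw m l, 0 < x := by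
  simp_rw [ae_iff, not_lt]
  rw [Set.Iic_def, gammaLaw, withDensity_apply _ measurableSet_Iic,
    setLIntegral_congr_fun (g := 0) measurableSet_Iic fun x (hx : x ≤ 0) => by simp [hx.not_gt]]
  simp

lemma ProbabilityTheory.IndepFun.ae_ne_of_nullSingletonClass {Ω β : Type*} [MeasurableSpace Ω]
    [MeasurableSpace β] [MeasurableEq β] {P : Measure Ω} [IsFiniteMeasure P] {X Y : Ω → β}
    (hXY : IndepFun X Y P) (hX : Measurable X) (hY : Measurable Y) [NullSingletonClass (P.map Y)] :
    ∀ᵐ ω ∂P, X ω ≠ Y ω := by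
  rw [ae_iff]
  simp only [ne_eq, not_not]
  change P ((fun ω => (X ω, Y ω)) ⁻¹' Set.diagonal β) = 0
  rw [← Measure.map_apply (hX.prodMk hY) measurableSet_diagonal,
    (indepFun_iff_map_prod_eq_prod_map_map hX.aemeasurable hY.aemeasurable).1 hXY,
    Measure.prod_apply measurableSet_diagonal]
  simp [Set.preimage, Set.diagonal]

lemma lt_iff_lt_of_sub_eq_mul {α : Type*} [Field α] [LinearOrder α] [IsStrictOrderedRing α]
    {k x y z w : α} (hk : 0 < k) (h : y - x = k * (z - w)) :
    x < y ↔ w < z := by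
  rw [← sub_pos, h, mul_pos_iff_of_pos_left hk, sub_pos]

section Rate

variable {ρ ΘB Θth ε1 ε2 ε3 ε4 b f : ℝ}

lemma one_sub_omegaFPA (hρ : 0 < ρ) (hΘB : 1 < ΘB) (hε1 : ε1 = (ΘB - 1) / ρ) (hb : ε1 < b) :
    1 - omegaFPA ρ ΘB b = (b - ε1) / (b * ΘB) := by
  have hb0 : 0 < b := lt_trans (by rw [hε1]; exact div_pos (by linarith) hρ) hb
  have hform : (ρ * b + 1) * (ΘB - 1) / (ρ * b * ΘB) = 1 - (b - ε1) / (b * ΘB) := by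
    rw [hε1]; field_simp; ring
  have hnonneg : 0 ≤ (b - ε1) / (b * ΘB) := div_nonneg (by linarith) (by positivity)
  rw [omegaFPA, hform, min_eq_left (by linarith), sub_sub_cancel]

lemma rateF_lt_logb_iff_of_lt (hρ : 0 < ρ) (hΘB : 1 < ΘB) (hΘth : 0 < Θth)
    (hε1 : ε1 = (ΘB - 1) / ρ) (hε2 : ε2 = ΘB * (Θth - 1) / ρ) (hb : ε1 < b) (hbf : b < f) :
    rateF ρ ΘB b f < Real.logb 2 Θth ↔ f * (b - ε1) < ε2 * b := by
  have hb0 : 0 < b := lt_trans (by rw [hε1]; exact div_pos (by linarith) hρ) hb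
  have hω := one_sub_omegaFPA hρ hΘB hε1 hb
  have hω0 : 0 ≤ (b - ε1) / (b * ΘB) := div_nonneg (by linarith) (by positivity)
  have harg : 0 < 1 + (b - ε1) / (b * ΘB) * ρ * f := by
    have := mul_nonneg (mul_nonneg hω0 hρ.le) (hb0.trans hbf).le
    linarith
  rw [rateF, if_pos hbf, hω, Real.logb_lt_logb_iff one_lt_two harg hΘth]
  refine lt_iff_lt_of_sub_eq_mul (k := ρ / (b * ΘB)) (by positivity) ?_
  rw [hε2]
  field_simp
  ring

lemma rateF_lt_logb_iff_of_le (hρ : 0 < ρ) (hΘB : 1 < ΘB) (hΘth : 0 < Θth)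
    (hth : Θth * (ΘB - 1) < ΘB) (hε1 : ε1 = (ΘB - 1) / ρ)
    (hε3 : ε3 = (ΘB - 1) * Θth / (ρ * (Θth - (Θth - 1) * ΘB)))
    (hε4 : ε4 = ΘB * (Θth - 1) / (ρ * (ΘB - Θth * (ΘB - 1))))
    (hb : ε1 < b) (hf : 0 < f) (hfb : f ≤ b) :
    rateF ρ ΘB b f < Real.logb 2 Θth ↔ f * (b - ε3) < ε4 * b := by
  have hε1_pos : 0 < ε1 := by rw [hε1]; exact div_pos (by linarith) hρ
  have hb0 : 0 < b := hε1_pos.trans hb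
  have hc : 0 < ΘB - Θth * (ΘB - 1) := by linarith
  rw [show Θth - (Θth - 1) * ΘB = ΘB - Θth * (ΘB - 1) by ring] at hε3
  have h0 : ε1 * ρ = ΘB - 1 := by rw [hε1, div_mul_cancel₀ _ hρ.ne']
  have h3 : ε3 * (ρ * (ΘB - Θth * (ΘB - 1))) = (ΘB - 1) * Θth := by
    rw [hε3, div_mul_cancel₀ _ (by positivity)]
  have h4 : ε4 * (ρ * (ΘB - Θth * (ΘB - 1))) = ΘB * (Θth - 1) := by
    rw [hε4, div_mul_cancel₀ _ (by positivity)]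
  have h1 : (b - ε1) / (b * ΘB) * (b * ΘB) = b - ε1 := div_mul_cancel₀ _ (by positivity)
  have hw0 : 0 ≤ (b - ε1) / (b * ΘB) := div_nonneg (by linarith) (by positivity)
  have hw1 : (b - ε1) / (b * ΘB) ≤ 1 := by
    rw [div_le_one (by positivity)]
    nlinarith
  have hω : omegaFPA ρ ΘB b = 1 - (b - ε1) / (b * ΘB) := by
    linarith [one_sub_omegaFPA hρ hΘB hε1 hb]
  rw [rateF, if_neg hfb.not_gt, hω, sub_sub_cancel]
  generalize (b - ε1) / (b * ΘB) = w at *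
  have hden : 0 < 1 + (1 - w) * ρ * f := by
    have : 0 ≤ (1 - w) * ρ * f := mul_nonneg (mul_nonneg (by linarith) hρ.le) hf.le
    linarith
  have harg : 0 < 1 + w * ρ * f / (1 + (1 - w) * ρ * f) := by positivity
  rw [Real.logb_lt_logb_iff one_lt_two harg hΘth]
  refine lt_iff_lt_of_sub_eq_mul
    (k := ρ * (ΘB - Θth * (ΘB - 1)) / (b * ΘB * (1 + (1 - w) * ρ * f))) (by positivity) ?_
  have key : (Θth - 1) * (b * ΘB * (1 + (1 - w) * ρ * f)) - w * ρ * f * (b * ΘB)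
      = ρ * (ΘB - Θth * (ΘB - 1)) * (ε4 * b - f * (b - ε3)) := by
    linear_combination (-Θth * ρ * f) * h1 + (Θth * f) * h0 - b * h4 - f * h3
  rw [div_mul_eq_mul_div, ← key]
  generalize 1 + (1 - w) * ρ * f = D at hden ⊢
  field_simp
  ring

end Rate

section Regions

variable {α : Type*} [Field α] [LinearOrder α] [IsStrictOrderedRing α] {ε1 ε2 ε3 ε4 b f : α}

lemma mul_sub_lt_mul_iff_of_lt (hb0 : 0 < b) (hb : ε1 < b) (hbf : b < f) :
    f * (b - ε1) < ε2 * b ↔ b < ε1 + ε2 ∧ f < ε2 * b / (b - ε1) := by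
  rw [← lt_div_iff₀ (sub_pos.2 hb), iff_and_self]
  intro h
  have := (lt_div_iff₀ (sub_pos.2 hb)).1 (hbf.trans h)
  nlinarith

lemma mul_sub_lt_mul_iff_of_gt (hf : 0 < f) (hfb : f < b) (hε4 : 0 < ε4) (hb : b ≠ ε3 + ε4) :
    f * (b - ε3) < ε4 * b ↔ b < ε3 + ε4 ∨ (ε3 + ε4 < b ∧ f < ε4 * b / (b - ε3)) := by
  rcases hb.lt_or_gt with hb | hb
  · simp only [hb, true_or, iff_true]
    rcases le_or_gt b ε3 with hb3 | hb3
    · nlinarith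
    · nlinarith [mul_lt_mul_of_pos_right hfb (sub_pos.2 hb3)]
  · simp only [hb.not_gt, hb, true_and, false_or]
    rw [lt_div_iff₀ (by linarith)]

lemma not_lt_div_sub_of_le (hε3 : 0 ≤ ε3) (hε4 : 0 ≤ ε4) (hb : ε3 + ε4 < b) (hbf : b ≤ f) :
    ¬ f < ε4 * b / (b - ε3) := by
  rw [not_lt, div_le_iff₀ (by linarith)]
  nlinarith

end Regions

section Outage

variable {ρ ΘB Θth ε1 ε2 ε0 ε3 ε4 ε5 b f : ℝ}

lemma threshold_order (hρ : 0 < ρ) (hΘB : 1 < ΘB) (hΘth : 1 < Θth)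
    (hth : Θth * (ΘB - 1) < ΘB) (hε1 : ε1 = (ΘB - 1) / ρ)
    (hε3 : ε3 = (ΘB - 1) * Θth / (ρ * (Θth - (Θth - 1) * ΘB)))
    (hε4 : ε4 = ΘB * (Θth - 1) / (ρ * (ΘB - Θth * (ΘB - 1)))) :
    0 < ε1 ∧ ε1 < ε3 ∧ 0 < ε4 := by
  have hc : 0 < Θth - (Θth - 1) * ΘB := by linarith
  have hc1 : Θth - (Θth - 1) * ΘB < Θth := by nlinarith
  refine ⟨by rw [hε1]; exact div_pos (by linarith) hρ, ?_, by rw [hε4]; apply div_pos <;> nlinarith⟩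
  rw [hε1, hε3, mul_comm ρ, ← div_div, div_lt_div_iff_of_pos_right hρ, lt_div_iff₀ hc]
  nlinarith

lemma rateF_outage_iff (hρ : 0 < ρ) (hΘB : 1 < ΘB) (hΘth : 1 < Θth) (hth : Θth * (ΘB - 1) < ΘB)
    (hε1 : ε1 = (ΘB - 1) / ρ) (hε2 : ε2 = ΘB * (Θth - 1) / ρ) (hε0 : ε0 = ε1 + ε2)
    (hε3 : ε3 = (ΘB - 1) * Θth / (ρ * (Θth - (Θth - 1) * ΘB)))
    (hε4 : ε4 = ΘB * (Θth - 1) / (ρ * (ΘB - Θth * (ΘB - 1)))) (hε5 : ε5 = ε3 + ε4)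
    (hf : 0 < f) (hfb : f ≠ b) (hb5 : b ≠ ε5) :
    (ε1 < b ∧ rateF ρ ΘB b f < Real.logb 2 Θth) ↔
      (ε1 < b ∧ b < ε0 ∧ b < f ∧ f < ε2 * b / (b - ε1)) ∨ (f < b ∧ ε1 < b ∧ b < ε5) ∨
        (ε5 < b ∧ f < ε4 * b / (b - ε3)) := by
  obtain ⟨hε1_pos, hε13, hε4_pos⟩ := threshold_order hρ hΘB hΘth hth hε1 hε3 hε4
  subst hε0 hε5
  by_cases hb : ε1 < b
  swap
  · have : ¬ ε3 + ε4 < b := fun h => hb (by linarith)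
    simp [hb, this]
  rcases hfb.lt_or_gt with hfb | hbf
  · rw [rateF_lt_logb_iff_of_le hρ hΘB (by linarith) hth hε1 hε3 hε4 hb hf hfb.le,
      mul_sub_lt_mul_iff_of_gt hf hfb hε4_pos hb5]
    simp [hb, hfb, hfb.not_gt]
  · have hE3 := not_lt_div_sub_of_le (ε3 := ε3) (b := b) (f := f) (by linarith) hε4_pos.le
    rw [rateF_lt_logb_iff_of_lt hρ hΘB (by linarith) hε1 hε2 hb hbf,
      mul_sub_lt_mul_iff_of_lt (hε1_pos.trans hb) hb hbf]
    simp only [hb, hbf, true_and, hbf.not_gt, false_and, false_or]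
    exact (or_iff_left fun h => hE3 h.1 hbf.le h.2).symm

end Outage

theorem stmt_15_general {Ω : Type*} [MeasurableSpace Ω] (P : Measure Ω) [IsProbabilityMeasure P]
    (m : ℕ) (lB lF : ℝ)
    (GB GF : Ω → ℝ) (hGB : Measurable GB) (hGF : Measurable GF)
    (hBlaw : P.map GB = gammaLaw m lB) (hFlaw : P.map GF = gammaLaw m lF)
    (hindep : IndepFun GB GF P)
    (ρ ΘB Θth : ℝ) (hρ : 0 < ρ) (hΘB : 1 < ΘB) (hΘth : 1 < Θth)
    (hth : Θth < ΘB / (ΘB - 1))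
    (ε1 ε2 ε0 ε3 ε4 ε5 : ℝ)
    (hε1 : ε1 = (ΘB - 1) / ρ) (hε2 : ε2 = ΘB * (Θth - 1) / ρ) (hε0 : ε0 = ε1 + ε2)
    (hε3 : ε3 = (ΘB - 1) * Θth / (ρ * (Θth - (Θth - 1) * ΘB)))
    (hε4 : ε4 = ΘB * (Θth - 1) / (ρ * (ΘB - Θth * (ΘB - 1)))) (hε5 : ε5 = ε3 + ε4) :
    P {ω | GB ω ≤ ε1} +
        P {ω | ε1 < GB ω ∧ rateF ρ ΘB (GB ω) (GF ω) < Real.logb 2 Θth} =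
      P {ω | GB ω ≤ ε1} +
        P {ω | ε1 < GB ω ∧ GB ω < ε0 ∧ GB ω < GF ω ∧ GF ω < ε2 * GB ω / (GB ω - ε1)} +
        P {ω | GF ω < GB ω ∧ ε1 < GB ω ∧ GB ω < ε5} +
        P {ω | ε5 < GB ω ∧ GF ω < ε4 * GB ω / (GB ω - ε3)} := by
  have hth' : Θth * (ΘB - 1) < ΘB := (lt_div_iff₀ (by linarith)).1 hth
  obtain ⟨hε1_pos, hε13, hε4_pos⟩ := threshold_order hρ hΘB hΘth hth' hε1 hε3 hε4
  set E₁ := {ω | ε1 < GB ω ∧ GB ω < ε0 ∧ GB ω < GF ω ∧ GF ω < ε2 * GB ω / (GB ω - ε1)} with hE₁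
  set E₂ := {ω | GF ω < GB ω ∧ ε1 < GB ω ∧ GB ω < ε5} with hE₂
  set E₃ := {ω | ε5 < GB ω ∧ GF ω < ε4 * GB ω / (GB ω - ε3)} with hE₃
  have hF_pos : ∀ᵐ ω ∂P, 0 < GF ω :=
    ae_of_ae_map hGF.aemeasurable (hFlaw ▸ ae_gammaLaw_pos m lF)
  have hB_ne : ∀ᵐ ω ∂P, GB ω ≠ ε5 :=
    ae_of_ae_map hGB.aemeasurable (hBlaw ▸ Measure.ae_ne (gammaLaw m lB) ε5)
  have : NullSingletonClass (P.map GF) := hFlaw ▸ inferInstance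
  have hae : ({ω | ε1 < GB ω ∧ rateF ρ ΘB (GB ω) (GF ω) < Real.logb 2 Θth} : Set Ω) =ᵐ[P]
      (E₁ ∪ E₂ ∪ E₃ : Set Ω) := by
    rw [Filter.eventuallyEq_set]
    filter_upwards [hF_pos, hB_ne, hindep.ae_ne_of_nullSingletonClass hGB hGF] with ω hf hb5 hbf
    simpa only [hE₁, hE₂, hE₃, Set.mem_union, Set.mem_ofPred_eq, or_assoc] using
      rateF_outage_iff hρ hΘB hΘth hth' hε1 hε2 hε0 hε3 hε4 hε5 hf (Ne.symm hbf) hb5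
  have hE₁₂ : Disjoint E₁ E₂ := Set.disjoint_left.2 fun ω h₁ h₂ => h₁.2.2.1.not_gt h₂.1
  have hE₁₂₃ : Disjoint (E₁ ∪ E₂) E₃ := by
    refine Set.disjoint_left.2 fun ω h h₃ => h.elim (fun h₁ => ?_) fun h₂ => h₂.2.2.not_gt h₃.1
    exact not_lt_div_sub_of_le (by linarith) hε4_pos.le (hε5 ▸ h₃.1) h₁.2.2.1.le h₃.2
  rw [measure_congr hae, measure_union hE₁₂₃ (by measurability),
    measure_union hE₁₂ (by measurability)]
  ring

/-- exact FPA outage probability decomposition in the case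
1 < Θ_th < Θ_B/(Θ_B − 1) (Theorem 1 of the paper):
P(G_B ≤ ε1) + P(G_B > ε1, R_F(G_B,G_F) < log₂ Θ_th)
 = P(G_B ≤ ε1) + P(ε1 < G_B < ε0, G_B < G_F < ε2 G_B/(G_B − ε1))
   + P(G_F < G_B, ε1 < G_B < ε5) + P(G_B > ε5, G_F < ε4 G_B/(G_B − ε3)). -/
theorem stmt_15 {Ω : Type*} [MeasurableSpace Ω] (P : Measure Ω) [IsProbabilityMeasure P]
    (m : ℕ) (hm : 1 ≤ m) (lB lF : ℝ) (hlB : 0 < lB) (hlF : 0 < lF)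
    (GB GF : Ω → ℝ) (hGB : Measurable GB) (hGF : Measurable GF)
    (hBlaw : P.map GB = gammaLaw m lB) (hFlaw : P.map GF = gammaLaw m lF)
    (hindep : IndepFun GB GF P)
    (ρ ΘB Θth : ℝ) (hρ : 0 < ρ) (hΘB : 1 < ΘB) (hΘth : 1 < Θth)
    (hth : Θth < ΘB / (ΘB - 1))
    (ε1 ε2 ε0 ε3 ε4 ε5 : ℝ)
    (hε1 : ε1 = (ΘB - 1) / ρ) (hε2 : ε2 = ΘB * (Θth - 1) / ρ) (hε0 : ε0 = ε1 + ε2)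
    (hε3 : ε3 = (ΘB - 1) * Θth / (ρ * (Θth - (Θth - 1) * ΘB)))
    (hε4 : ε4 = ΘB * (Θth - 1) / (ρ * (ΘB - Θth * (ΘB - 1)))) (hε5 : ε5 = ε3 + ε4) :
    P {ω | GB ω ≤ ε1} +
        P {ω | ε1 < GB ω ∧ rateF ρ ΘB (GB ω) (GF ω) < Real.logb 2 Θth} =
      P {ω | GB ω ≤ ε1} +
        P {ω | ε1 < GB ω ∧ GB ω < ε0 ∧ GB ω < GF ω ∧ GF ω < ε2 * GB ω / (GB ω - ε1)} +
        P {ω | GF ω < GB ω ∧ ε1 < GB ω ∧ GB ω < ε5} +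
        P {ω | ε5 < GB ω ∧ GF ω < ε4 * GB ω / (GB ω - ε3)} :=
  stmt_15_general P m lB lF GB GF hGB hGF hBlaw hFlaw hindep ρ ΘB Θth hρ hΘB hΘth hth ε1 ε2 ε0 ε3 ε4
    ε5 hε1 hε2 hε0 hε3 hε4 hε5
end

section
/- Assume Θ_B > 1 and Θ_th > Θ_B/(Θ_B − 1). Let G_B, G_F be independent Gamma random variables with integer shape m ≥ 1 and rates λ_B, λ_F > 0, and for ρ > 0 set ε1(ρ) = (Θ_B − 1)/ρ, ε2(ρ) = Θ_B(Θ_th − 1)/ρ, ε0(ρ) = ε1(ρ) + ε2(ρ), and define the FPA outage probability P_out(ρ) = P(G_B ≤ ε1(ρ)) + P(ε1(ρ) < G_B < ε0(ρ) and G_B < G_F < ε2(ρ)G_B/(G_B − ε1(ρ))) + P(G_F < G_B and G_B > ε1(ρ)). Then lim_{ρ → ∞} P_out(ρ) = P(G_F < G_B), and this limit is strictly positive; in particular P_out(ρ) does not tend to 0 as ρ → ∞ (outage probability floor, diversity order 0). -/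
open MeasureTheory ProbabilityTheory Filter

/-!
The outage probability lies between `P(G_F < G_B)` and
`P(G_F < G_B) + P(G_B ≤ ε₁(ρ)) + P(G_B ≤ ε₀(ρ))`: the middle event forces `G_B < ε₀(ρ)`, and
`{G_F < G_B}` is covered by `{G_B ≤ ε₁(ρ)}` and the third event. Both extra terms vanish as
`ρ → ∞`, since the thresholds decrease to `0`, the CDF of `G_B` is right-continuous, and a Gamma
law puts no mass on `(-∞, 0]`. The limit is positive because, by independence,
`P(G_F < G_B) ≥ P(G_B > 1) P(G_F < 1)`, and a Gamma law charges every set of positive Lebesgue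
measure in `(0, ∞)`.
-/

open Set Topology

lemma gammaLaw_eq_zero_iff {m : ℕ} (hm : 1 ≤ m) {l : ℝ} (hl : 0 < l) (s : Set ℝ) :
    gammaLaw m l s = 0 ↔ volume (Ioi 0 ∩ s) = 0 := by
  have hΓ : 0 < Real.Gamma m := Real.Gamma_pos_of_pos (by exact_mod_cast hm)
  have hsupp : {x : ℝ | ENNReal.ofReal (if 0 < x then
      l ^ m * x ^ (m - 1) * Real.exp (-(l * x)) / Real.Gamma m else 0) ≠ 0} = Ioi 0 := by
    ext x
    by_cases hx : 0 < x
    · simp [hx]; positivity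
    · simp [hx]
  rw [gammaLaw, withDensity_apply_eq_zero'
    (Measurable.ite measurableSet_Ioi (by fun_prop) measurable_const).ennreal_ofReal.aemeasurable,
    hsupp]

section

variable {Ω : Type*} [MeasurableSpace Ω] (P : Measure Ω)

lemma tendsto_measureReal_le_div_atTop [IsProbabilityMeasure P] {X : Ω → ℝ} (hX : Measurable X)
    (h0 : P {ω | X ω ≤ 0} = 0) {c : ℝ} (hc : 0 ≤ c) :
    Tendsto (fun ρ => P.real {ω | X ω ≤ c / ρ}) atTop (𝓝 0) := by
  have := Measure.isProbabilityMeasure_map (μ := P) hX.aemeasurable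
  have hcdf : ∀ t, cdf (P.map X) t = P.real {ω | X ω ≤ t} := fun t => by
    rw [cdf_eq_real, map_measureReal_apply hX measurableSet_Iic]; rfl
  have hε : Tendsto (fun ρ : ℝ => c / ρ) atTop (𝓝[≥] 0) :=
    tendsto_nhdsWithin_of_tendsto_nhds_of_eventually_within _
      (tendsto_const_nhds.div_atTop tendsto_id)
      (eventually_gt_atTop 0 |>.mono fun ρ hρ => div_nonneg hc hρ.le)
  have h := ((cdf (P.map X)).right_continuous 0).tendsto.comp hε
  simp only [Function.comp_def, hcdf, measureReal_def, h0, ENNReal.toReal_zero] at h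
  exact h

lemma measureReal_add_add_mem_Icc [IsFiniteMeasure P] (X Y : Ω → ℝ) (ε δ : ℝ) (p : Ω → Prop) :
    P.real {ω | X ω ≤ ε} + P.real {ω | ε < X ω ∧ X ω < δ ∧ p ω} +
        P.real {ω | Y ω < X ω ∧ ε < X ω} ∈
      Icc (P.real {ω | Y ω < X ω})
        (P.real {ω | Y ω < X ω} + P.real {ω | X ω ≤ ε} + P.real {ω | X ω ≤ δ}) := by
  have hsplit : P.real {ω | Y ω < X ω} ≤
      P.real {ω | X ω ≤ ε} + P.real {ω | Y ω < X ω ∧ ε < X ω} := by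
    refine (measureReal_mono fun ω hω => ?_).trans (measureReal_union_le _ _)
    by_cases h : ε < X ω
    · exact Or.inr ⟨hω, h⟩
    · exact Or.inl (not_lt.mp h)
  have hmid : P.real {ω | ε < X ω ∧ X ω < δ ∧ p ω} ≤ P.real {ω | X ω ≤ δ} :=
    measureReal_mono fun ω hω => hω.2.1.le
  have hlast : P.real {ω | Y ω < X ω ∧ ε < X ω} ≤ P.real {ω | Y ω < X ω} :=
    measureReal_mono fun ω hω => hω.1
  constructor <;> linarith [measureReal_nonneg (μ := P) (s := {ω | ε < X ω ∧ X ω < δ ∧ p ω})]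

lemma measure_lt_pos_of_indepFun {X Y : Ω → ℝ} (hXY : IndepFun X Y P) (a : ℝ)
    (hX : 0 < P (X ⁻¹' Ioi a)) (hY : 0 < P (Y ⁻¹' Iio a)) : 0 < P {ω | Y ω < X ω} := by
  have hinter : 0 < P (X ⁻¹' Ioi a ∩ Y ⁻¹' Iio a) := by
    rw [hXY.measure_inter_preimage_eq_mul _ _ measurableSet_Ioi measurableSet_Iio]
    exact ENNReal.mul_pos hX.ne' hY.ne'
  exact hinter.trans_le (measure_mono fun ω ⟨hx, hy⟩ => show Y ω < X ω from lt_trans hy hx)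

end

/-- Assume Θ_B > 1 and Θ_th > Θ_B/(Θ_B − 1). With ε1(ρ) = (Θ_B − 1)/ρ,
ε2(ρ) = Θ_B(Θ_th − 1)/ρ, ε0(ρ) = ε1(ρ) + ε2(ρ), and FPA outage probability
P_out(ρ) = P(G_B ≤ ε1(ρ)) + P(ε1(ρ) < G_B < ε0(ρ), G_B < G_F < ε2(ρ)G_B/(G_B − ε1(ρ)))
         + P(G_F < G_B, G_B > ε1(ρ)),
one has lim_{ρ→∞} P_out(ρ) = P(G_F < G_B) > 0; in particular P_out does not tend to 0
(outage probability floor, diversity order 0). -/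
theorem stmt_18 {Ω : Type*} [MeasurableSpace Ω] (P : Measure Ω) [IsProbabilityMeasure P]
    (m : ℕ) (hm : 1 ≤ m) (lB lF : ℝ) (hlB : 0 < lB) (hlF : 0 < lF)
    (GB GF : Ω → ℝ) (hGB : Measurable GB) (hGF : Measurable GF)
    (hBlaw : P.map GB = gammaLaw m lB) (hFlaw : P.map GF = gammaLaw m lF)
    (hindep : IndepFun GB GF P)
    (ΘB Θth : ℝ) (hΘB : 1 < ΘB) (hth : ΘB / (ΘB - 1) < Θth)
    (Pout : ℝ → ℝ)
    (hPout : ∀ ρ : ℝ, 0 < ρ →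
      Pout ρ =
        (P {ω | GB ω ≤ (ΘB - 1) / ρ}).toReal +
          (P {ω | (ΘB - 1) / ρ < GB ω ∧ GB ω < (ΘB - 1) / ρ + ΘB * (Θth - 1) / ρ ∧
            GB ω < GF ω ∧
            GF ω < (ΘB * (Θth - 1) / ρ) * GB ω / (GB ω - (ΘB - 1) / ρ)}).toReal +
          (P {ω | GF ω < GB ω ∧ (ΘB - 1) / ρ < GB ω}).toReal) :
    Tendsto Pout atTop (nhds (P {ω | GF ω < GB ω}).toReal) ∧
      0 < (P {ω | GF ω < GB ω}).toReal ∧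
      ¬ Tendsto Pout atTop (nhds 0) := by
  simp only [← measureReal_def] at hPout ⊢
  set L := P.real {ω | GF ω < GB ω}
  have hc1 : 0 < ΘB - 1 := sub_pos.mpr hΘB
  have hc2 : 0 < ΘB * (Θth - 1) :=
    mul_pos (by linarith) (sub_pos.mpr (((one_lt_div hc1).mpr (by linarith)).trans hth))
  have hB0 : P {ω | GB ω ≤ 0} = 0 := by
    rw [show {ω | GB ω ≤ 0} = GB ⁻¹' Iic 0 from rfl, ← Measure.map_apply hGB measurableSet_Iic,
      hBlaw, gammaLaw_eq_zero_iff hm hlB]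
    simp [Ioi_inter_Iic]
  have hupper := (tendsto_const_nhds (x := L)).add
    (tendsto_measureReal_le_div_atTop P hGB hB0 hc1.le) |>.add
    (tendsto_measureReal_le_div_atTop P hGB hB0 (add_pos hc1 hc2).le)
  simp only [add_div, add_zero] at hupper
  have hT : Tendsto Pout atTop (𝓝 L) := by
    refine tendsto_of_tendsto_of_tendsto_of_le_of_le' tendsto_const_nhds hupper ?_ ?_ <;>
      filter_upwards [eventually_gt_atTop 0] with ρ hρ <;>
      rw [hPout ρ hρ]
    exacts [(measureReal_add_add_mem_Icc P GB GF _ _ _).1,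
      (measureReal_add_add_mem_Icc P GB GF _ _ _).2]
  have hL : 0 < L := by
    refine ENNReal.toReal_pos (measure_lt_pos_of_indepFun P hindep 1 ?_ ?_).ne' (measure_ne_top _ _)
    · rw [← Measure.map_apply hGB measurableSet_Ioi, hBlaw, pos_iff_ne_zero, Ne,
        gammaLaw_eq_zero_iff hm hlB]
      simp
    · rw [← Measure.map_apply hGF measurableSet_Iio, hFlaw, pos_iff_ne_zero, Ne,
        gammaLaw_eq_zero_iff hm hlF]
      simp [Ioi_inter_Iio]
  exact ⟨hT, hL, fun h0 => hL.ne' (tendsto_nhds_unique hT h0)⟩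
end
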